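/- Let X be a G-space and f : X → X be pseudoequivariant and totally G-transitive such that the set of G_f-periodic points of f is dense in X. Then f is weakly G-mixing. -/

import Mathlib

open Pointwise

/-- `f` is pseudoequivariant: `f(G • x) = G • f(x)` for every `x ∈ X`. -/
def Pseudoequivariant {G X : Type*} [Group G] [MulAction G X] (f : X → X) : Prop :=
  ∀ x : X, f '' (MulAction.orbit G x) = MulAction.orbit G (f x)

/-- `f` is `G`-transitive: for every pair of nonempty open sets `U, V ⊆ X` there are
`g ∈ G` and `k ≥ 1` with `g • f^[k] '' U ∩ V ≠ ∅`. -/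
def GTransitive {G X : Type*} [Group G] [MulAction G X] [TopologicalSpace X]
    (f : X → X) : Prop :=
  ∀ U V : Set X, IsOpen U → IsOpen V → U.Nonempty → V.Nonempty →
    ∃ (g : G) (k : ℕ), 1 ≤ k ∧ (g • (f^[k] '' U) ∩ V).Nonempty

/-- `f` is weakly `G`-mixing: `f × f` is `(G × G)`-transitive, i.e. for all nonempty open
`U, V, E, F ⊆ X` there are `g, h ∈ G` and `k ≥ 1` with `g • f^[k] '' U ∩ E ≠ ∅` and
`h • f^[k] '' V ∩ F ≠ ∅`. -/
def WeaklyGMixing {G X : Type*} [Group G] [MulAction G X] [TopologicalSpace X]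
    (f : X → X) : Prop :=
  ∀ U V E F : Set X, IsOpen U → IsOpen V → IsOpen E → IsOpen F →
    U.Nonempty → V.Nonempty → E.Nonempty → F.Nonempty →
    ∃ (g h : G) (k : ℕ), 1 ≤ k ∧
      (g • (f^[k] '' U) ∩ E).Nonempty ∧ (h • (f^[k] '' V) ∩ F).Nonempty

/-!
Transitivity of `f` sends some `v ∈ V` into `G • F` after `m` steps, and the same holds for
every point of an open neighbourhood `W ⊆ V` of `v`. A `G_f`-periodic point `p ∈ W` of period
`n` returns to its own orbit after every multiple of `n` steps, so by pseudoequivariance it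
lands in `G • F` after `m + n j` steps for every `j`. Transitivity of `f^n`, applied to `U` and
the open set `f^{-m}(E)`, provides one `j` for which `U` also reaches `G • E` after `m + n j`
steps; that preimage is nonempty since the range of `f^m` is `G`-invariant and, by transitivity
of `f^m`, meets `G • E`.
-/

open MulAction

section Pseudoequivariant

variable {G X : Type*} [Group G] [MulAction G X]

theorem smul_image_inter_nonempty_iff (g : G) (φ : X → X) (U V : Set X) :
    (g • (φ '' U) ∩ V).Nonempty ↔ ∃ u ∈ U, g • φ u ∈ V := by
  rw [← Set.image_smul, Set.image_image, Set.image_inter_nonempty_iff]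
  rfl

theorem Pseudoequivariant.comp {f₁ f₂ : X → X} (h₁ : Pseudoequivariant (G := G) f₁)
    (h₂ : Pseudoequivariant (G := G) f₂) : Pseudoequivariant (G := G) (f₁ ∘ f₂) := by
  intro x
  rw [Set.image_comp, h₂, h₁, Function.comp_apply]

theorem Pseudoequivariant.iterate {f : X → X} (hf : Pseudoequivariant (G := G) f) (m : ℕ) :
    Pseudoequivariant (G := G) f^[m] := by
  induction m with
  | zero => intro x; simp
  | succ m ih => rw [Function.iterate_succ']; exact hf.comp ih

theorem Pseudoequivariant.apply_mem_orbit {f : X → X} (hf : Pseudoequivariant (G := G) f)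
    {x y : X} (hy : y ∈ orbit G x) : f y ∈ orbit G (f x) :=
  hf x ▸ Set.mem_image_of_mem f hy

theorem Pseudoequivariant.exists_apply_eq_smul {f : X → X}
    (hf : Pseudoequivariant (G := G) f) (g : G) (x : X) : ∃ w, f w = g • f x := by
  obtain ⟨w, -, hw⟩ := (hf x).symm ▸ mem_orbit (f x) g
  exact ⟨w, hw⟩

theorem Pseudoequivariant.iterate_mem_orbit {f : X → X} (hf : Pseudoequivariant (G := G) f)
    {x : X} (hx : f x ∈ orbit G x) (j : ℕ) : f^[j] x ∈ orbit G x := by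
  induction j with
  | zero => exact mem_orbit_self x
  | succ j ih =>
    rw [Function.iterate_succ_apply', ← orbit_eq_iff.mpr hx]
    exact hf.apply_mem_orbit ih

variable [TopologicalSpace X]

theorem GTransitive.preimage_nonempty {f : X → X} (hpe : Pseudoequivariant (G := G) f)
    (ht : GTransitive (G := G) f) {E : Set X} (hE : IsOpen E) (hE₀ : E.Nonempty) :
    (f ⁻¹' E).Nonempty := by
  obtain ⟨g, k, hk, hEE⟩ := ht E E hE hE hE₀ hE₀
  obtain ⟨e, -, he⟩ := (smul_image_inter_nonempty_iff g _ E E).mp hEE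
  obtain ⟨k, rfl⟩ := Nat.exists_eq_add_of_le' hk
  rw [Function.iterate_succ_apply'] at he
  obtain ⟨w, hw⟩ := hpe.exists_apply_eq_smul g (f^[k] e)
  exact ⟨w, by rwa [Set.mem_preimage, hw]⟩

end Pseudoequivariant

theorem totallyGTransitive_densePeriodic_weaklyGMixing_general {G X : Type*} [Group G]
    [TopologicalSpace G] [TopologicalSpace X] [MulAction G X]
    [ContinuousSMul G X]
    (f : X → X) (hf : Continuous f) (hpe : Pseudoequivariant (G := G) f)
    (htt : ∀ m : ℕ, 1 ≤ m → GTransitive (G := G) (f^[m]))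
    (hper : Dense {x : X | ∃ (g : G) (k : ℕ), 1 ≤ k ∧ g • f^[k] x = x}) :
    WeaklyGMixing (G := G) f := by
  intro U V E F hU hV hE hF hU₀ hV₀ hE₀ hF₀
  obtain ⟨g₁, m, hm, hVF⟩ := htt 1 le_rfl V F hV hF hV₀ hF₀
  rw [Function.iterate_one, smul_image_inter_nonempty_iff] at hVF
  set W := V ∩ (fun x ↦ g₁ • f^[m] x) ⁻¹' F
  have hW : IsOpen W := hV.inter (hF.preimage ((hf.iterate m).const_smul g₁))
  obtain ⟨p, ⟨g₀, n, hn, hp⟩, hpV, hpF⟩ := hper.exists_mem_open hW hVF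
  have hpn : f^[n] p ∈ orbit G p := ⟨g₀⁻¹, inv_smul_eq_iff.mpr hp.symm⟩
  have hEm : IsOpen (f^[m] ⁻¹' E) := hE.preimage (hf.iterate m)
  obtain ⟨g₂, j, -, hUE⟩ := htt n hn U _ hU hEm hU₀
    ((htt m hm).preimage_nonempty (hpe.iterate m) hE hE₀)
  obtain ⟨u, huU, huE⟩ := (smul_image_inter_nonempty_iff g₂ _ U _).mp hUE
  rw [← Function.iterate_mul, Set.mem_preimage] at huE
  obtain ⟨e, he : e • _ = _⟩ := (hpe.iterate m).apply_mem_orbit (mem_orbit (f^[n * j] u) g₂)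
  obtain ⟨d, hd : d • _ = _⟩ := (hpe.iterate m).apply_mem_orbit
    (Function.iterate_mul f n j ▸ (hpe.iterate n).iterate_mem_orbit hpn j)
  refine ⟨e, g₁ * d⁻¹, m + n * j, hm.trans (Nat.le_add_right m _), ?_, ?_⟩
  · refine (smul_image_inter_nonempty_iff e _ U E).mpr ⟨u, huU, ?_⟩
    rwa [Function.iterate_add_apply, he]
  · refine (smul_image_inter_nonempty_iff _ _ V F).mpr ⟨p, hpV, ?_⟩
    rwa [Function.iterate_add_apply, ← hd, mul_smul, inv_smul_smul]

/-- Let `X` be a `G`-space and `f : X → X` be pseudoequivariant and totally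
`G`-transitive with a dense set of `G_f`-periodic points (points `x` with
`g • f^[k] x = x` for some `g ∈ G` and `k ≥ 1`). Then `f` is weakly `G`-mixing. -/
theorem totallyGTransitive_densePeriodic_weaklyGMixing {G X : Type*} [Group G]
    [TopologicalSpace G] [IsTopologicalGroup G] [TopologicalSpace X] [MulAction G X]
    [ContinuousSMul G X]
    (f : X → X) (hf : Continuous f) (hpe : Pseudoequivariant (G := G) f)
    (htt : ∀ m : ℕ, 1 ≤ m → GTransitive (G := G) (f^[m]))
    (hper : Dense {x : X | ∃ (g : G) (k : ℕ), 1 ≤ k ∧ g • f^[k] x = x}) :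
    WeaklyGMixing (G := G) f :=
  totallyGTransitive_densePeriodic_weaklyGMixing_general f hf hpe htt hper
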